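/- In any duplicial algebra (A, /, \), defining the magmatic bracket {x,y} := x\y - x/y, the following identity holds: {x,{y,z}} differs from {{x,y},z} in a way expressible via the duplicial products, namely {z₁,{z₂,...,{z_{m-1},z_m}...}} = z₁\{z₂,...,{z_{m-1},z_m}...} - z₁/z₂\{z₃,...,{z_{m-1},z_m}...} + ... + (-1)^{m-1} z₁/z₂/.../z_m for all z₁,...,z_m ∈ A (for m ≥ 2). -/

import Mathlib

variable {K V : Type*} [Field K] [AddCommGroup V] [Module K V]

/-- Left-normed product `z / z₂ / ⋯ / z_m`. -/
def slashAll (d : V →ₗ[K] V →ₗ[K] V) (z : V) (l : List V) : V :=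
  l.foldl (fun acc w => d acc w) z

/-- Nested bracket `{z, {w₁, {w₂, …}}}` where `{x,y} := x\y - x/y`. -/
def nestBr (d b : V →ₗ[K] V →ₗ[K] V) : V → List V → V
  | z, [] => z
  | z, w :: t => b z (nestBr d b w t) - d z (nestBr d b w t)

/-- Nested bracket of a (nonempty) list. -/
def nestList (d b : V →ₗ[K] V →ₗ[K] V) : List V → V
  | [] => 0
  | w :: t => nestBr d b w t

/-!
Since `{z, X} = z\X - z/X`, it suffices that left `/`-multiplication enters a nested bracket
through its first entry: `z/{w, Y} = z/(w\Y) - z/(w/Y) = {z/w, Y}` by the two associativity laws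
involving `/`. Unfolding the outer bracket and pushing `z/` inside thus gives
`{z, w, …} = z\{w, …} - {z/w, …}`, and iterating along the list telescopes to the alternating sum.
-/

section

variable (d b : V →ₗ[K] V →ₗ[K] V)

theorem slashAll_cons (z w : V) (l : List V) : slashAll d z (w :: l) = slashAll d (d z w) l :=
  rfl

theorem nestBr_cons (z w : V) (t : List V) :
    nestBr d b z (w :: t) = b z (nestBr d b w t) - d z (nestBr d b w t) :=
  rfl

variable {d b}

theorem d_nestBr (ax1 : ∀ x y z : V, d x (d y z) = d (d x y) z)
    (ax2 : ∀ x y z : V, d x (b y z) = b (d x y) z) (z w : V) (t : List V) :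
    d z (nestBr d b w t) = nestBr d b (d z w) t := by
  cases t with
  | nil => rfl
  | cons u s => simp only [nestBr_cons, map_sub, ax1, ax2]

theorem nestBr_eq_alternating_sum (ax1 : ∀ x y z : V, d x (d y z) = d (d x y) z)
    (ax2 : ∀ x y z : V, d x (b y z) = b (d x y) z) (z : V) (l : List V) :
    nestBr d b z l =
      (∑ j ∈ Finset.range l.length,
        ((-1 : ℤ) ^ j) • b (slashAll d z (l.take j)) (nestList d b (l.drop j))) +
      ((-1 : ℤ) ^ l.length) • slashAll d z l := by
  induction l generalizing z with
  | nil => simp [nestBr, slashAll]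
  | cons w t ih =>
    rw [nestBr_cons, d_nestBr ax1 ax2, ih (d z w), List.length_cons, Finset.sum_range_succ']
    simp only [List.take_succ_cons, List.drop_succ_cons, slashAll_cons, pow_succ, mul_neg_one,
      neg_smul, Finset.sum_neg_distrib]
    have head_term : ((-1 : ℤ) ^ 0) • b (slashAll d z ((w :: t).take 0))
        (nestList d b ((w :: t).drop 0)) = b z (nestBr d b w t) := one_smul ℤ _
    rw [head_term]
    abel

end

theorem duplicial_nested_bracket_general (d b : V →ₗ[K] V →ₗ[K] V)
    (ax1 : ∀ x y z : V, d x (d y z) = d (d x y) z)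
    (ax2 : ∀ x y z : V, d x (b y z) = b (d x y) z) :
    ∀ (z : V) (l : List V), l ≠ [] →
      nestBr d b z l =
        (∑ j ∈ Finset.range l.length,
          ((-1 : ℤ) ^ j) • b (slashAll d z (l.take j)) (nestList d b (l.drop j))) +
        ((-1 : ℤ) ^ l.length) • slashAll d z l :=
  fun z l _ => nestBr_eq_alternating_sum ax1 ax2 z l

/-- In any duplicial algebra `(A, /, \)`, with `{x,y} := x\y - x/y`:
`{z₁,{z₂,…,{z_{m-1},z_m}…}} = Σ_{j} (-1)^j (z₁/…/z_{j+1}) \ {z_{j+2},…,z_m}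
+ (-1)^{m-1} z₁/z₂/…/z_m`. -/
theorem duplicial_nested_bracket (d b : V →ₗ[K] V →ₗ[K] V)
    (ax1 : ∀ x y z : V, d x (d y z) = d (d x y) z)
    (ax2 : ∀ x y z : V, d x (b y z) = b (d x y) z)
    (ax3 : ∀ x y z : V, b x (b y z) = b (b x y) z) :
    ∀ (z : V) (l : List V), l ≠ [] →
      nestBr d b z l =
        (∑ j ∈ Finset.range l.length,
          ((-1 : ℤ) ^ j) • b (slashAll d z (l.take j)) (nestList d b (l.drop j))) +
        ((-1 : ℤ) ^ l.length) • slashAll d z l :=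
  duplicial_nested_bracket_general d b ax1 ax2
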